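/- For any x > 0 and y > 0, Γ(x,y) ≥ exp((x+y-2) Γ'(1)), where Γ'(1) is the derivative of the Euler gamma function at 1 (equal to -γ, minus the Euler–Mascheroni constant). -/

import Mathlib

/-!
Jensen's inequality for `exp` and the uniform probability measure on `(0, 1)`: the integrand of
`biGamma x y` is `exp ∘ g` with `g t = (x - 1) log (-log t) + (y - 1) log (-log (1 - t))`.
The substitution `t = exp (-u)` turns `∫₀¹ log (-log t) dt` into `∫₀^∞ log u e^{-u} du = Γ'(1)`,
and the reflection `t ↦ 1 - t` gives the same value for the second term, so
`∫₀¹ g = (x + y - 2) Γ'(1)`. Integrability of the integrand follows by comparison with a Beta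
integrand `t ^ a (1 - t) ^ b`, `a, b > -1`.
-/

open Real Set intervalIntegral

noncomputable def biGamma (x y : ℝ) : ℝ :=
  ∫ t in (0:ℝ)..1, (-Real.log t) ^ (x - 1) * (-Real.log (1 - t)) ^ (y - 1)

open MeasureTheory

lemma neg_log_le_rpow_neg_div {t ε : ℝ} (ht : 0 < t) (hε : 0 < ε) :
    -log t ≤ t ^ (-ε) / ε := by
  simpa [log_inv, inv_rpow ht.le, ← rpow_neg ht.le] using
    log_le_rpow_div (inv_nonneg.2 ht.le) hε

lemma one_sub_le_neg_log {t : ℝ} (ht : 0 < t) : 1 - t ≤ -log t := by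
  linarith [log_le_sub_one_of_pos ht]

lemma abs_log_le_two_mul_rpow_neg_half_add_self {u : ℝ} (hu : 0 < u) :
    |log u| ≤ 2 * u ^ (-(1 / 2) : ℝ) + u := by
  have h_upper : log u ≤ u := (log_le_sub_one_of_pos hu).trans (by linarith)
  have h_lower : -log u ≤ 2 * u ^ (-(1 / 2) : ℝ) :=
    (neg_log_le_rpow_neg_div (ε := 1 / 2) hu (by norm_num)).trans_eq (by ring)
  have h_rpow : 0 ≤ u ^ (-(1 / 2) : ℝ) := rpow_nonneg hu.le _
  exact abs_le.2 ⟨by linarith, by linarith⟩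

lemma exp_mul_log_add_mul_log {a b : ℝ} (ha : 0 < a) (hb : 0 < b) (p q : ℝ) :
    exp (p * log a + q * log b) = a ^ p * b ^ q := by
  rw [exp_add, rpow_def_of_pos ha, rpow_def_of_pos hb, mul_comm p, mul_comm q]

lemma integrableOn_log_mul_exp_neg :
    IntegrableOn (fun u : ℝ => log u * exp (-u)) (Ioi 0) := by
  have h_dom : IntegrableOn (fun u : ℝ => 2 * (exp (-u) * u ^ ((1 / 2 : ℝ) - 1))
      + exp (-u) * u ^ ((2 : ℝ) - 1)) (Ioi 0) :=
    ((GammaIntegral_convergent (by norm_num)).const_mul 2).add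
      (GammaIntegral_convergent (by norm_num))
  refine h_dom.mono' (by fun_prop) ?_
  filter_upwards [ae_restrict_mem measurableSet_Ioi] with u (hu : 0 < u)
  calc ‖log u * exp (-u)‖ = |log u| * exp (-u) := by
        rw [norm_mul, norm_eq_abs, norm_of_nonneg (exp_pos _).le]
    _ ≤ (2 * u ^ (-(1 / 2) : ℝ) + u) * exp (-u) :=
        mul_le_mul_of_nonneg_right (abs_log_le_two_mul_rpow_neg_half_add_self hu) (exp_pos _).le
    _ = 2 * (exp (-u) * u ^ ((1 / 2 : ℝ) - 1)) + exp (-u) * u ^ ((2 : ℝ) - 1) := by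
        rw [show (1 / 2 : ℝ) - 1 = -(1 / 2) by norm_num, show (2 : ℝ) - 1 = 1 by norm_num,
          rpow_one]
        ring

lemma deriv_Gamma_one_eq_integral :
    deriv Gamma 1 = ∫ u in Ioi 0, log u * exp (-u) := by
  have h_integral := Complex.hasDerivAt_GammaIntegral (s := 1) (by norm_num)
  simp only [sub_self, Complex.cpow_zero, one_mul] at h_integral
  have h_complex : HasDerivAt Complex.Gamma ((∫ u in Ioi 0, log u * exp (-u) : ℝ) : ℂ) 1 := by
    rw [← integral_complex_ofReal]
    simp only [Complex.ofReal_mul]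
    refine h_integral.congr_of_eventuallyEq ?_
    filter_upwards [(isOpen_lt continuous_const Complex.continuous_re).mem_nhds
      (by norm_num : (0 : ℝ) < (1 : ℂ).re)] with s hs
    exact Complex.Gamma_eq_integral hs
  simpa [Complex.Gamma_ofReal] using h_complex.real_of_complex.deriv

lemma image_exp_neg_Ioi_zero : (fun u : ℝ => exp (-u)) '' Ioi 0 = Ioo 0 1 := by
  rw [show (fun u : ℝ => exp (-u)) = exp ∘ Neg.neg from rfl, image_comp, image_neg_Ioi,
    neg_zero, image_exp_Iio, exp_zero]

section NegLogSubstitution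

variable {E : Type*} [NormedAddCommGroup E] [NormedSpace ℝ E]

lemma hasDerivWithinAt_exp_neg (s : Set ℝ) (u : ℝ) :
    HasDerivWithinAt (fun u => exp (-u)) (-exp (-u)) s u := by
  simpa using (hasDerivAt_neg u).exp.hasDerivWithinAt

lemma injOn_exp_neg (s : Set ℝ) : InjOn (fun u => exp (-u)) s :=
  fun _ _ _ _ h => neg_injective (exp_injective h)

lemma integrableOn_Ioo_comp_neg_log_iff (g : ℝ → E) :
    IntegrableOn (fun t => g (-log t)) (Ioo 0 1) ↔
      IntegrableOn (fun u => exp (-u) • g u) (Ioi 0) := by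
  rw [← image_exp_neg_Ioi_zero, integrableOn_image_iff_integrableOn_abs_deriv_smul
    measurableSet_Ioi (fun u _ => hasDerivWithinAt_exp_neg _ u) (injOn_exp_neg _)]
  simp [abs_of_pos (exp_pos _)]

lemma integral_Ioo_comp_neg_log (g : ℝ → E) :
    ∫ t in Ioo 0 1, g (-log t) = ∫ u in Ioi 0, exp (-u) • g u := by
  rw [← image_exp_neg_Ioi_zero, integral_image_eq_integral_abs_deriv_smul
    measurableSet_Ioi (fun u _ => hasDerivWithinAt_exp_neg _ u) (injOn_exp_neg _)]
  simp [abs_of_pos (exp_pos _)]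

end NegLogSubstitution

lemma intervalIntegrable_log_neg_log :
    IntervalIntegrable (fun t => log (-log t)) volume 0 1 := by
  rw [intervalIntegrable_iff_integrableOn_Ioo_of_le zero_le_one,
    integrableOn_Ioo_comp_neg_log_iff log]
  simpa only [smul_eq_mul, mul_comm] using integrableOn_log_mul_exp_neg

lemma integral_log_neg_log : ∫ t in (0 : ℝ)..1, log (-log t) = deriv Gamma 1 := by
  rw [integral_of_le zero_le_one, integral_Ioc_eq_integral_Ioo, integral_Ioo_comp_neg_log log,
    deriv_Gamma_one_eq_integral]
  simp only [smul_eq_mul, mul_comm]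

lemma ae_restrict_uIoc_mem_Ioo {μ : Measure ℝ} [NullSingletonClass μ] {a b : ℝ} (hab : a ≤ b) :
    ∀ᵐ t ∂μ.restrict (uIoc a b), t ∈ Ioo a b := by
  rw [uIoc_of_le hab, ← Measure.restrict_congr_set Ioo_ae_eq_Ioc]
  exact ae_restrict_mem measurableSet_Ioo

lemma intervalIntegrable_rpow_mul_one_sub_rpow {a b : ℝ} (ha : -1 < a) (hb : -1 < b) :
    IntervalIntegrable (fun t : ℝ => t ^ a * (1 - t) ^ b) volume 0 1 := by
  have h_beta := Complex.betaIntegral_convergent (u := a + 1) (v := b + 1)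
    (by simpa using by linarith) (by simpa using by linarith)
  refine h_beta.norm.congr_uIoo fun t ht => ?_
  obtain ⟨ht0, ht1⟩ : t ∈ Ioo 0 1 := by rwa [uIoo_of_le zero_le_one] at ht
  dsimp only
  rw [norm_mul, add_sub_cancel_right, add_sub_cancel_right,
    show (1 : ℂ) - t = ((1 - t : ℝ) : ℂ) by push_cast; ring,
    Complex.norm_cpow_eq_rpow_re_of_pos ht0, Complex.norm_cpow_eq_rpow_re_of_pos (by linarith),
    Complex.ofReal_re, Complex.ofReal_re]

lemma exists_neg_log_rpow_le (p : ℝ) {ε : ℝ} (hε : 0 < ε) :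
    ∃ C, 0 ≤ C ∧ ∀ t ∈ Ioo (0 : ℝ) 1, (-log t) ^ p ≤ C * (t ^ (-ε) * (1 - t) ^ min p 0) := by
  rcases le_or_gt p 0 with hp | hp
  · refine ⟨1, zero_le_one, fun t ⟨ht0, ht1⟩ => ?_⟩
    rw [min_eq_left hp, one_mul]
    calc (-log t) ^ p ≤ (1 - t) ^ p :=
          rpow_le_rpow_of_nonpos (by linarith) (one_sub_le_neg_log ht0) hp
      _ ≤ t ^ (-ε) * (1 - t) ^ p :=
          le_mul_of_one_le_left (rpow_nonneg (by linarith) _)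
            (one_le_rpow_of_pos_of_le_one_of_nonpos ht0 ht1.le (by linarith))
  · refine ⟨(p / ε) ^ p, rpow_nonneg (div_pos hp hε).le _, fun t ⟨ht0, ht1⟩ => ?_⟩
    rw [min_eq_right hp.le, rpow_zero, mul_one]
    have h_log : -log t ≤ p / ε * t ^ (-(ε / p)) :=
      (neg_log_le_rpow_neg_div ht0 (div_pos hε hp)).trans_eq (by field_simp)
    calc (-log t) ^ p ≤ (p / ε * t ^ (-(ε / p))) ^ p :=
          rpow_le_rpow (by linarith [one_sub_le_neg_log ht0]) h_log hp.le
      _ = (p / ε) ^ p * t ^ (-ε) := by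
          rw [mul_rpow (div_pos hp hε).le (rpow_nonneg ht0.le _), ← rpow_mul ht0.le]
          field_simp

lemma biGamma_integrand_le {x y ε C₁ C₂ t : ℝ} (ht : t ∈ Ioo (0 : ℝ) 1)
    (hC₁ : 0 ≤ C₁) (h₁ : ∀ t ∈ Ioo (0 : ℝ) 1,
      (-log t) ^ (x - 1) ≤ C₁ * (t ^ (-ε) * (1 - t) ^ min (x - 1) 0))
    (h₂ : ∀ t ∈ Ioo (0 : ℝ) 1,
      (-log t) ^ (y - 1) ≤ C₂ * (t ^ (-ε) * (1 - t) ^ min (y - 1) 0)) :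
    (-log t) ^ (x - 1) * (-log (1 - t)) ^ (y - 1) ≤
      C₁ * C₂ * (t ^ (min (y - 1) 0 - ε) * (1 - t) ^ (min (x - 1) 0 - ε)) := by
  obtain ⟨ht0, ht1⟩ := ht
  have h₂' := h₂ (1 - t) ⟨by linarith, by linarith⟩
  rw [sub_sub_cancel] at h₂'
  calc (-log t) ^ (x - 1) * (-log (1 - t)) ^ (y - 1)
      ≤ C₁ * (t ^ (-ε) * (1 - t) ^ min (x - 1) 0) * (C₂ * ((1 - t) ^ (-ε) * t ^ min (y - 1) 0)) :=
        mul_le_mul (h₁ t ⟨ht0, ht1⟩) h₂'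
          (rpow_nonneg (neg_nonneg.2 (log_nonpos (by linarith) (by linarith))) _) (by positivity)
    _ = C₁ * C₂ * (t ^ (min (y - 1) 0 - ε) * (1 - t) ^ (min (x - 1) 0 - ε)) := by
        rw [sub_eq_neg_add (min (y - 1) 0), sub_eq_neg_add (min (x - 1) 0), rpow_add ht0,
          rpow_add (by linarith)]
        ring

lemma intervalIntegrable_biGamma_integrand {x y : ℝ} (hx : 0 < x) (hy : 0 < y) :
    IntervalIntegrable (fun t => (-log t) ^ (x - 1) * (-log (1 - t)) ^ (y - 1)) volume 0 1 := by
  obtain ⟨ε, hε, hε_lt⟩ := exists_between (lt_min (lt_min hx hy) one_pos)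
  obtain ⟨⟨hεx, hεy⟩, hε1⟩ := by simpa only [lt_min_iff] using hε_lt
  obtain ⟨C₁, hC₁, h₁⟩ := exists_neg_log_rpow_le (x - 1) hε
  obtain ⟨C₂, -, h₂⟩ := exists_neg_log_rpow_le (y - 1) hε
  have h_dom := (intervalIntegrable_rpow_mul_one_sub_rpow
    (a := min (y - 1) 0 - ε) (b := min (x - 1) 0 - ε)
    (by rw [lt_sub_iff_add_lt, lt_min_iff]; constructor <;> linarith)
    (by rw [lt_sub_iff_add_lt, lt_min_iff]; constructor <;> linarith)).const_mul (C₁ * C₂)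
  refine h_dom.mono_fun' (by fun_prop) ?_
  filter_upwards [ae_restrict_uIoc_mem_Ioo zero_le_one] with t ⟨ht0, ht1⟩
  rw [norm_of_nonneg (mul_nonneg (rpow_nonneg (neg_nonneg.2 (log_nonpos ht0.le ht1.le)) _)
    (rpow_nonneg (neg_nonneg.2 (log_nonpos (by linarith) (by linarith))) _))]
  exact biGamma_integrand_le ⟨ht0, ht1⟩ hC₁ h₁ h₂

theorem biGamma_ge_exp (x y : ℝ) (hx : 0 < x) (hy : 0 < y) :
    Real.exp ((x + y - 2) * deriv Real.Gamma 1) ≤ biGamma x y := by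
  let μ := volume.restrict (Ioc (0 : ℝ) 1)
  have : IsProbabilityMeasure μ := ⟨by simp [μ]⟩
  let g t := (x - 1) * log (-log t) + (y - 1) * log (-log (1 - t))
  have h_log := intervalIntegrable_log_neg_log
  have h_log_reflect : IntervalIntegrable (fun t => log (-log (1 - t))) volume 0 1 := by
    simpa only [sub_zero, sub_self] using (h_log.comp_sub_left 1).symm
  have hg : IntervalIntegrable g volume 0 1 :=
    (h_log.const_mul _).add (h_log_reflect.const_mul _)
  have h_integral_g : ∫ t in (0 : ℝ)..1, g t = (x + y - 2) * deriv Gamma 1 := by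
    rw [integral_add (h_log.const_mul _) (h_log_reflect.const_mul _),
      intervalIntegral.integral_const_mul, intervalIntegral.integral_const_mul,
      integral_comp_sub_left (fun t => log (-log t)), sub_self, sub_zero, integral_log_neg_log]
    ring
  have h_exp_g : EqOn (fun t => exp (g t))
      (fun t => (-log t) ^ (x - 1) * (-log (1 - t)) ^ (y - 1)) (Ioo 0 1) :=
    fun t ⟨ht0, ht1⟩ => exp_mul_log_add_mul_log (neg_pos.2 (log_neg ht0 ht1))
      (neg_pos.2 (log_neg (by linarith) (by linarith))) _ _
  calc exp ((x + y - 2) * deriv Gamma 1) = exp (∫ t, g t ∂μ) := by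
        rw [← h_integral_g, integral_of_le zero_le_one]
    _ ≤ ∫ t, exp (g t) ∂μ :=
        convexOn_exp.map_integral_le continuous_exp.continuousOn isClosed_univ (by simp) hg.1
          ((intervalIntegrable_biGamma_integrand hx hy).congr_uIoo
            (by rw [uIoo_of_le zero_le_one]; exact h_exp_g.symm)).1
    _ = biGamma x y := by
        rw [← integral_of_le zero_le_one, biGamma]
        exact integral_congr_Ioo_of_le zero_le_one h_exp_g
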